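/- arXiv:1609.04146 — 7 statements merged into one kernel-verified Lean document; each statement's English description precedes it below -/
import Mathlib

section
/- Suppose (BR) holds. Then m · ∏_{j=1}^{ℓ} c_j = 1080. -/
open LaurentPolynomial Finset

/-- `r a = X^{2a} + X^{-2a}` in `ℤ[X, X⁻¹]`, where `X` plays the role of `ζ^{1/2}`. -/
noncomputable def rLaurent (a : ℤ) : LaurentPolynomial ℤ := T (2 * a) + T (-(2 * a))

/-- `σ₁(d) = ∑_j r(d_j)`. -/
noncomputable def sigma1 {ℓ : ℕ} (d : Fin ℓ → ℤ) : LaurentPolynomial ℤ :=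
  ∑ j, rLaurent (d j)

/-- `σ₂(d) = ∑_{i < j} r(d_i) r(d_j)`. -/
noncomputable def sigma2 {ℓ : ℕ} (d : Fin ℓ → ℤ) : LaurentPolynomial ℤ :=
  ∑ i, ∑ j ∈ univ.filter (fun j => i < j), rLaurent (d i) * rLaurent (d j)

/-! Each factor `X^a - X^{-a}` is `X - 1` times a Laurent polynomial taking the value `2a` at
`X = 1`. Cancelling `(X - 1)^ℓ` from both sides of (BR) and evaluating at `X = 1` gives
`m ∏ 2 c_j d_j = (2ℓ(ℓ - 1) + (2k - 1) 2ℓ + 2k² - 3k + ℓ) ∏ 2 d_j`, and the bracket is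
`2n² - 3n = 1080` for `n = k + ℓ = 24`. -/
namespace LaurentPolynomial

variable {R : Type*} [CommRing R]

theorem T_sub_T_neg_eq_sum_mul (a : ℕ) :
    (T a - T (-a) : R[T;T⁻¹]) = (∑ i ∈ range (2 * a), T (i - a)) * (T 1 - 1) := by
  have telescope := sum_range_sub (fun i : ℕ => (T (i - a) : R[T;T⁻¹])) (2 * a)
  rw [sum_mul]
  simp only [mul_sub, mul_one, ← T_add]
  convert telescope.symm using 3 with i <;> push_cast <;> ring_nf

theorem T_one_sub_one_ne_zero [Nontrivial R] : (T 1 - 1 : R[T;T⁻¹]) ≠ 0 := by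
  rw [← Polynomial.toLaurent_X, ← Polynomial.toLaurent_one, ← map_sub,
    Polynomial.toLaurent_ne_zero]
  exact Polynomial.X_sub_C_ne_zero 1

theorem eval₂_one_sum_T (a : ℕ) :
    eval₂ (RingHom.id R) 1 (∑ i ∈ range (2 * a), T (i - a)) = 2 * a := by
  simp [map_sum]

theorem prod_T_sub_T_neg_eq {ι : Type*} (s : Finset ι) (a : ι → ℕ) :
    ∏ j ∈ s, (T (a j) - T (-a j) : R[T;T⁻¹]) =
      (∏ j ∈ s, ∑ i ∈ range (2 * a j), T (i - a j)) * (T 1 - 1) ^ #s := by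
  simp only [T_sub_T_neg_eq_sum_mul, prod_mul_distrib, prod_const]

theorem eval₂_one_mul_prod_eq_of_mul_prod_T_sub_T_neg_eq [IsDomain R] {ι : Type*}
    {s : Finset ι} {a b : ι → ℕ} {p q : R[T;T⁻¹]}
    (h : p * ∏ j ∈ s, (T (a j) - T (-a j)) = q * ∏ j ∈ s, (T (b j) - T (-b j))) :
    eval₂ (RingHom.id R) 1 p * ∏ j ∈ s, (2 * a j : R) =
      eval₂ (RingHom.id R) 1 q * ∏ j ∈ s, (2 * b j : R) := by
  rw [prod_T_sub_T_neg_eq, prod_T_sub_T_neg_eq, ← mul_assoc, ← mul_assoc] at h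
  have := congrArg (eval₂ (RingHom.id R) 1)
    (mul_right_cancel₀ (pow_ne_zero _ T_one_sub_one_ne_zero) h)
  simpa only [map_mul, map_prod, eval₂_one_sum_T] using this

end LaurentPolynomial

theorem eval₂_one_rLaurent (a : ℤ) : eval₂ (RingHom.id ℤ) 1 (rLaurent a) = 2 := by
  simp [rLaurent]

theorem eval₂_one_sigma1 {ℓ : ℕ} (d : Fin ℓ → ℤ) :
    eval₂ (RingHom.id ℤ) 1 (sigma1 d) = 2 * ℓ := by
  simp [sigma1, map_sum, eval₂_one_rLaurent, mul_comm]

theorem Fin.sum_card_Ioi (ℓ : ℕ) : ∑ i : Fin ℓ, #(Ioi i) = ℓ.choose 2 := by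
  simp only [Fin.card_Ioi]
  rw [Fin.sum_univ_eq_sum_range (fun i => ℓ - 1 - i), sum_range_reflect (fun i => i) ℓ,
    sum_range_id, Nat.choose_two_right]

theorem eval₂_one_sigma2 {ℓ : ℕ} (d : Fin ℓ → ℤ) :
    eval₂ (RingHom.id ℤ) 1 (sigma2 d) = 2 * ℓ * (ℓ - 1) := by
  simp only [sigma2, map_sum, map_mul, eval₂_one_rLaurent, filter_lt_eq_Ioi, sum_const,
    nsmul_eq_mul, ← sum_mul, ← Nat.cast_sum, Fin.sum_card_Ioi]
  qify
  rw [Nat.cast_choose_two]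
  ring

theorem stmt_0_general (ℓ : ℕ) (hℓ24 : ℓ ≤ 24) (k : ℕ) (hk : k = 24 - ℓ)
    (m : ℕ) (c d : Fin ℓ → ℕ)
    (hd : ∀ j, 1 ≤ d j)
    (hBR : (m : LaurentPolynomial ℤ) *
        ∏ j, (T ((c j : ℤ) * (d j : ℤ)) - T (-((c j : ℤ) * (d j : ℤ)))) =
      (sigma2 (fun j => (d j : ℤ)) +
          ((2 * (k : ℤ) - 1 : ℤ) : LaurentPolynomial ℤ) * sigma1 (fun j => (d j : ℤ)) +
          ((2 * (k : ℤ) ^ 2 - 3 * (k : ℤ) + (ℓ : ℤ) : ℤ) : LaurentPolynomial ℤ)) *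
        ∏ j, (T ((d j : ℤ)) - T (-(d j : ℤ)))) :
    m * ∏ j, c j = 1080 := by
  simp only [← Nat.cast_mul] at hBR
  have heval := eval₂_one_mul_prod_eq_of_mul_prod_T_sub_T_neg_eq hBR
  have hfactor :
      2 * (ℓ : ℤ) * (ℓ - 1) + (2 * k - 1) * (2 * ℓ) + (2 * k ^ 2 - 3 * k + ℓ) = 1080 := by
    rw [show (k : ℤ) = 24 - ℓ by omega]
    ring
  have hsplit : ∏ j, (2 * ((c j * d j : ℕ) : ℤ)) = (∏ j, (c j : ℤ)) * ∏ j, 2 * (d j : ℤ) := by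
    rw [← prod_mul_distrib]
    exact prod_congr rfl fun j _ => by push_cast; ring
  have hd_prod : ∏ j, 2 * (d j : ℤ) ≠ 0 := prod_ne_zero_iff.2 fun j _ => by have := hd j; omega
  simp only [map_add, map_mul, map_natCast, map_intCast, Int.cast_id, eval₂_one_sigma1,
    eval₂_one_sigma2] at heval
  rw [hfactor, hsplit, ← mul_assoc] at heval
  exact_mod_cast mul_right_cancel₀ hd_prod heval

/-- Equation (BR). -/
theorem stmt_0 (ℓ : ℕ) (hℓ : 1 ≤ ℓ) (hℓ24 : ℓ ≤ 24) (k : ℕ) (hk : k = 24 - ℓ)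
    (m : ℕ) (hm : 1 ≤ m) (c d : Fin ℓ → ℕ)
    (hc : ∀ j, 1 ≤ c j) (hd : ∀ j, 1 ≤ d j)
    (hBR : (m : LaurentPolynomial ℤ) *
        ∏ j, (T ((c j : ℤ) * (d j : ℤ)) - T (-((c j : ℤ) * (d j : ℤ)))) =
      (sigma2 (fun j => (d j : ℤ)) +
          ((2 * (k : ℤ) - 1 : ℤ) : LaurentPolynomial ℤ) * sigma1 (fun j => (d j : ℤ)) +
          ((2 * (k : ℤ) ^ 2 - 3 * (k : ℤ) + (ℓ : ℤ) : ℤ) : LaurentPolynomial ℤ)) *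
        ∏ j, (T ((d j : ℤ)) - T (-(d j : ℤ)))) :
    m * ∏ j, c j = 1080 :=
  stmt_0_general ℓ hℓ24 k hk m c d hd hBR
end

section
/- Suppose (BR) holds. Then ∑_{j=1}^{ℓ} c_j² d_j² = 2 · ∑_{j=1}^{ℓ} d_j². -/
/-!
Substitute `X = eᵗ`, i.e. map `ℤ[X, X⁻¹]` to `ℚ⟦t⟧`. Then
`X^a - X^{-a} = t · 2a · (1 + a²t²/6 + O(t⁴))`, and for `k = 24 - ℓ` the factor
`σ₂(d) + (2k-1)σ₁(d) + 2k² - 3k + ℓ` becomes `1080 + 180 (∑ d_j²) t² + O(t⁴)`.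
After cancelling `t^ℓ`, the coefficients of `t⁰` and `t²` in (BR) give
`m ∏ 2c_jd_j = 1080 ∏ 2d_j` and then `(∑ c_j²d_j²)/6 = (∑ d_j²)/6 + (180/1080) ∑ d_j²`.
-/

open LaurentPolynomial Finset

open PowerSeries Nat

noncomputable def expSeries (a : ℤ) : ℚ⟦X⟧ := rescale (a : ℚ) (exp ℚ)

lemma coeff_expSeries (a : ℤ) (n : ℕ) : coeff n (expSeries a) = (a : ℚ) ^ n / n ! := by
  simp [expSeries, coeff_rescale, coeff_exp, div_eq_mul_inv]

@[simp]
lemma constantCoeff_expSeries (a : ℤ) : constantCoeff (expSeries a) = 1 := by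
  simpa using coeff_expSeries a 0

noncomputable def expSeriesHom : Multiplicative ℤ →* ℚ⟦X⟧ where
  toFun a := expSeries a.toAdd
  map_one' := by simp [expSeries]
  map_mul' a b := by simp [expSeries, exp_mul_exp_eq_exp_add]

noncomputable def evalExp : LaurentPolynomial ℤ →ₐ[ℤ] ℚ⟦X⟧ :=
  AddMonoidAlgebra.lift ℤ ℚ⟦X⟧ ℤ expSeriesHom

lemma evalExp_T (a : ℤ) : evalExp (T a) = expSeries a := by
  rw [evalExp, T, AddMonoidAlgebra.lift_single]
  exact one_smul ℤ _

def IsEvenJet (f : ℚ⟦X⟧) (a b : ℚ) : Prop :=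
  coeff 0 f = a ∧ coeff 1 f = 0 ∧ coeff 2 f = b

namespace IsEvenJet

variable {f g : ℚ⟦X⟧} {a b a' b' : ℚ}

lemma unique (h : IsEvenJet f a b) (h' : IsEvenJet f a' b') : a = a' ∧ b = b' :=
  ⟨h.1.symm.trans h'.1, h.2.2.symm.trans h'.2.2⟩

lemma intCast (z : ℤ) : IsEvenJet z z 0 := by
  rw [← map_intCast (PowerSeries.C (R := ℚ)) z]
  refine ⟨?_, ?_, ?_⟩ <;> rw [coeff_C] <;> simp

lemma natCast (n : ℕ) : IsEvenJet n n 0 := by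
  exact_mod_cast intCast n

lemma add (hf : IsEvenJet f a b) (hg : IsEvenJet g a' b') :
    IsEvenJet (f + g) (a + a') (b + b') := by
  obtain ⟨hf0, hf1, hf2⟩ := hf
  obtain ⟨hg0, hg1, hg2⟩ := hg
  refine ⟨?_, ?_, ?_⟩ <;> simp only [map_add, *, add_zero]

lemma mul (hf : IsEvenJet f a b) (hg : IsEvenJet g a' b') :
    IsEvenJet (f * g) (a * a') (a * b' + b * a') := by
  obtain ⟨hf0, hf1, hf2⟩ := hf
  obtain ⟨hg0, hg1, hg2⟩ := hg
  refine ⟨?_, ?_, ?_⟩ <;> simp [coeff_mul, Finset.Nat.antidiagonal_succ, *]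

lemma sum {ι : Type*} {s : Finset ι} {f : ι → ℚ⟦X⟧} {a b : ι → ℚ}
    (h : ∀ i ∈ s, IsEvenJet (f i) (a i) (b i)) :
    IsEvenJet (∑ i ∈ s, f i) (∑ i ∈ s, a i) (∑ i ∈ s, b i) := by
  simp only [IsEvenJet, map_sum]
  exact ⟨sum_congr rfl fun i hi => (h i hi).1, sum_eq_zero fun i hi => (h i hi).2.1,
    sum_congr rfl fun i hi => (h i hi).2.2⟩

lemma prod {ι : Type*} [DecidableEq ι] {s : Finset ι} {f : ι → ℚ⟦X⟧} {a β : ι → ℚ}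
    (h : ∀ i ∈ s, IsEvenJet (f i) (a i) (a i * β i)) :
    IsEvenJet (∏ i ∈ s, f i) (∏ i ∈ s, a i) ((∏ i ∈ s, a i) * ∑ i ∈ s, β i) := by
  induction s using Finset.induction_on with
  | empty => simpa using natCast 1
  | insert i s hi ih =>
    rw [prod_insert hi, prod_insert hi, sum_insert hi]
    convert (h i (mem_insert_self i s)).mul (ih fun j hj => h j (mem_insert_of_mem hj)) using 1
    ring

end IsEvenJet

lemma isEvenJet_expSeries_add_neg (a : ℤ) :
    IsEvenJet (expSeries a + expSeries (-a)) 2 (a ^ 2) := by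
  refine ⟨?_, ?_, ?_⟩ <;> simp [coeff_expSeries]
  ring

lemma isEvenJet_evalExp_rLaurent (a : ℤ) : IsEvenJet (evalExp (rLaurent a)) 2 (4 * a ^ 2) := by
  convert isEvenJet_expSeries_add_neg (2 * a) using 1
  · simp [rLaurent, evalExp_T]
  · push_cast; ring

noncomputable def sinhDivX (a : ℤ) : ℚ⟦X⟧ :=
  mk fun n => coeff (n + 1) (expSeries a - expSeries (-a))

lemma X_mul_sinhDivX (a : ℤ) : X * sinhDivX a = expSeries a - expSeries (-a) := by
  conv_rhs => rw [eq_X_mul_shift_add_const (expSeries a - expSeries (-a))]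
  simp [sinhDivX]

lemma evalExp_prod_T_sub_T {n : ℕ} (a : Fin n → ℤ) :
    evalExp (∏ j, (T (a j) - T (-a j))) = X ^ n * ∏ j, sinhDivX (a j) := by
  simp only [map_prod, map_sub, evalExp_T, ← X_mul_sinhDivX, prod_mul_distrib, prod_const,
    Finset.card_fin]

lemma isEvenJet_sinhDivX (a : ℤ) : IsEvenJet (sinhDivX a) (2 * a) (2 * a * (a ^ 2 / 6)) := by
  refine ⟨?_, ?_, ?_⟩ <;> simp [sinhDivX, coeff_expSeries, factorial] <;> ring

lemma sum_sum_filter_lt_add {n : ℕ} (g : Fin n → ℚ) :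
    ∑ i, ∑ j ∈ univ.filter (fun j => i < j), (g i + g j) = (n - 1) * ∑ i, g i := by
  have hswap : ∑ i, ∑ j ∈ univ.filter (fun j => i < j), g j =
      ∑ i, ∑ j ∈ univ.filter (fun j => j < i), g i := by
    simp only [sum_filter]
    exact sum_comm
  have hcard (i : Fin n) :
      (#(univ.filter (fun j => i < j)) + #(univ.filter (fun j => j < i)) : ℚ) = n - 1 := by
    rw [filter_lt_eq_Ioi, filter_gt_eq_Iio, Fin.card_Ioi, Fin.card_Iio, ← Nat.cast_add,
      show n - 1 - i + i = n - 1 by omega, Nat.cast_pred i.pos]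
  simp only [sum_add_distrib]
  rw [hswap, ← sum_add_distrib, mul_sum]
  simp only [sum_const, nsmul_eq_mul, ← add_mul, hcard]

lemma isEvenJet_evalExp_sigma1 {n : ℕ} (d : Fin n → ℤ) :
    IsEvenJet (evalExp (sigma1 d)) (2 * n) (4 * ∑ j, (d j : ℚ) ^ 2) := by
  rw [sigma1, map_sum]
  convert IsEvenJet.sum (s := univ) fun j _ => isEvenJet_evalExp_rLaurent (d j) using 1
  · simp [mul_comm]
  · rw [mul_sum]

lemma isEvenJet_evalExp_sigma2 {n : ℕ} (d : Fin n → ℤ) :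
    IsEvenJet (evalExp (sigma2 d)) (2 * n * (n - 1)) (8 * (n - 1) * ∑ j, (d j : ℚ) ^ 2) := by
  rw [sigma2]
  simp only [map_sum, map_mul]
  convert IsEvenJet.sum fun i _ => IsEvenJet.sum fun j _ =>
    (isEvenJet_evalExp_rLaurent (d i)).mul (isEvenJet_evalExp_rLaurent (d j)) using 1
  · rw [show (2 : ℚ) * 2 = 2 + 2 by norm_num, sum_sum_filter_lt_add]
    simp only [sum_const, Finset.card_fin, nsmul_eq_mul]
    ring
  · rw [mul_assoc, mul_left_comm, mul_sum, ← sum_sum_filter_lt_add]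
    exact sum_congr rfl fun i _ => sum_congr rfl fun j _ => by ring

lemma isEvenJet_evalExp_sigma2_add_sigma1 {n : ℕ} (d : Fin n → ℤ) (k : ℤ) (hk : k + n = 24) :
    IsEvenJet (evalExp (sigma2 d + ((2 * k - 1 : ℤ) : LaurentPolynomial ℤ) * sigma1 d +
      ((2 * k ^ 2 - 3 * k + n : ℤ) : LaurentPolynomial ℤ))) 1080 (180 * ∑ j, (d j : ℚ) ^ 2) := by
  have hkq : (k : ℚ) = 24 - n := by rw [eq_sub_iff_add_eq]; exact_mod_cast hk
  simp only [map_add, map_mul, map_intCast]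
  convert ((isEvenJet_evalExp_sigma2 d).add
    ((IsEvenJet.intCast _).mul (isEvenJet_evalExp_sigma1 d))).add (IsEvenJet.intCast _) using 1 <;>
  · push_cast
    rw [hkq]
    ring

theorem stmt_1_general (ℓ : ℕ) (hℓ24 : ℓ ≤ 24) (k : ℕ) (hk : k = 24 - ℓ)
    (m : ℕ) (c d : Fin ℓ → ℕ)
    (hd : ∀ j, 1 ≤ d j)
    (hBR : (m : LaurentPolynomial ℤ) *
        ∏ j, (T ((c j : ℤ) * (d j : ℤ)) - T (-((c j : ℤ) * (d j : ℤ)))) =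
      (sigma2 (fun j => (d j : ℤ)) +
          ((2 * (k : ℤ) - 1 : ℤ) : LaurentPolynomial ℤ) * sigma1 (fun j => (d j : ℤ)) +
          ((2 * (k : ℤ) ^ 2 - 3 * (k : ℤ) + (ℓ : ℤ) : ℤ) : LaurentPolynomial ℤ)) *
        ∏ j, (T ((d j : ℤ)) - T (-(d j : ℤ)))) :
    ∑ j, (c j) ^ 2 * (d j) ^ 2 = 2 * ∑ j, (d j) ^ 2 := by
  have h := congrArg evalExp hBR
  rw [map_mul, map_mul, map_natCast, evalExp_prod_T_sub_T (fun j => (c j : ℤ) * d j),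
    evalExp_prod_T_sub_T (fun j => (d j : ℤ)), mul_left_comm, mul_left_comm (evalExp _)] at h
  have hL := (IsEvenJet.natCast m).mul
    (IsEvenJet.prod (s := univ) fun j _ => isEvenJet_sinhDivX (c j * d j))
  rw [mul_left_cancel₀ (pow_ne_zero ℓ X_ne_zero) h] at hL
  have hR := (isEvenJet_evalExp_sigma2_add_sigma1 (fun j => (d j : ℤ)) k (by omega)).mul
    (IsEvenJet.prod (s := univ) fun j _ => isEvenJet_sinhDivX (d j))
  obtain ⟨h0, h2⟩ := hL.unique hR
  simp only [← sum_div] at h2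
  push_cast at h0 h2
  have hP : ∏ j, (2 * (d j : ℚ)) ≠ 0 := prod_ne_zero_iff.mpr fun j _ => by
    have := hd j
    positivity
  have hQ : ∑ j, ((c j : ℚ) * d j) ^ 2 = 2 * ∑ j, (d j : ℚ) ^ 2 := mul_left_cancel₀ hP <| by
    linear_combination (6 / 1080) * h2 - (∑ j, ((c j : ℚ) * d j) ^ 2) / 1080 * h0
  simp only [← mul_pow]
  exact_mod_cast hQ

theorem stmt_1 (ℓ : ℕ) (hℓ : 1 ≤ ℓ) (hℓ24 : ℓ ≤ 24) (k : ℕ) (hk : k = 24 - ℓ)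
    (m : ℕ) (hm : 1 ≤ m) (c d : Fin ℓ → ℕ)
    (hc : ∀ j, 1 ≤ c j) (hd : ∀ j, 1 ≤ d j)
    (hBR : (m : LaurentPolynomial ℤ) *
        ∏ j, (T ((c j : ℤ) * (d j : ℤ)) - T (-((c j : ℤ) * (d j : ℤ)))) =
      (sigma2 (fun j => (d j : ℤ)) +
          ((2 * (k : ℤ) - 1 : ℤ) : LaurentPolynomial ℤ) * sigma1 (fun j => (d j : ℤ)) +
          ((2 * (k : ℤ) ^ 2 - 3 * (k : ℤ) + (ℓ : ℤ) : ℤ) : LaurentPolynomial ℤ)) *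
        ∏ j, (T ((d j : ℤ)) - T (-(d j : ℤ)))) :
    ∑ j, (c j) ^ 2 * (d j) ^ 2 = 2 * ∑ j, (d j) ^ 2 :=
  stmt_1_general ℓ hℓ24 k hk m c d hd hBR
end

section
/- Suppose (BR) holds. Then ∑_{j=1}^{ℓ} d_j² is even; in particular N = (1/2)·∑_{j=1}^{ℓ} d_j² is a natural number. -/
open LaurentPolynomial Finset

/-!
Substituting `X = exp t` turns (BR) into an identity in `ℚ⟦t⟧`. There
`X^a - X^{-a} = 2a t · (1 + a² t²/6 + O(t⁴))` and, because `k + ℓ = 24`, the factor in front of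
the right-hand product is `1080 + 180 (∑ d_j²) t² + O(t³)`. Comparing the coefficients of `t^ℓ` and
`t^{ℓ+2}` gives `m ∏ c_j = 1080` and `∑ (c_j d_j)² = 2 ∑ d_j²`.

Substituting `X ↦ -X` fixes `r(a)` and multiplies `∏ (X^{e_j} - X^{-e_j})` by `(-1)^{∑ e_j}`,
so `∑ c_j d_j ≡ ∑ d_j (mod 2)`. Since `x² ≡ x (mod 2)`,
`∑ d_j² ≡ ∑ d_j ≡ ∑ c_j d_j ≡ ∑ (c_j d_j)² = 2 ∑ d_j² ≡ 0 (mod 2)`.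
-/

open PowerSeries
open scoped Nat

noncomputable def sinhProd {ι : Type*} [Fintype ι] (e : ι → ℤ) : LaurentPolynomial ℤ :=
  ∏ j, (T (e j) - T (-e j))

noncomputable def brFactor {ℓ : ℕ} (k : ℤ) (d : Fin ℓ → ℤ) : LaurentPolynomial ℤ :=
  sigma2 d + ((2 * k - 1 : ℤ) : LaurentPolynomial ℤ) * sigma1 d +
    ((2 * k ^ 2 - 3 * k + ℓ : ℤ) : LaurentPolynomial ℤ)

lemma Fin.sum_sum_filter_lt_add_add_sum {M : Type*} [AddCommMonoid M] {n : ℕ} (x : Fin n → M) :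
    ∑ i, ∑ j ∈ univ.filter (i < ·), (x i + x j) + ∑ i, x i = n • ∑ i, x i := by
  have hswap : ∑ i, ∑ j ∈ univ.filter (i < ·), x j = ∑ j, ∑ i ∈ univ.filter (· < j), x j := by
    apply Finset.sum_comm'
    simp
  simp only [sum_add_distrib]
  rw [hswap, ← sum_add_distrib, ← sum_add_distrib, smul_sum]
  refine sum_congr rfl fun i _ => ?_
  rw [Finset.sum_const, Finset.sum_const, ← add_smul, ← succ_nsmul, filter_lt_eq_Ioi,
    filter_gt_eq_Iio, Fin.card_Ioi, Fin.card_Iio]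
  congr 1
  omega

lemma even_sum_sq_sub_sum {ι : Type*} (s : Finset ι) (x : ι → ℤ) :
    Even (∑ j ∈ s, x j ^ 2 - ∑ j ∈ s, x j) := by
  rw [← sum_sub_distrib]
  exact even_sum _ fun j _ => by simpa [sq, mul_sub] using Int.even_mul_pred_self (x j)

lemma even_sum_sq_of_sum_sq_eq_two_mul {ι : Type*} [Fintype ι] (e d : ι → ℤ)
    (hpar : Even (∑ j, e j - ∑ j, d j)) (hsq : ∑ j, e j ^ 2 = 2 * ∑ j, d j ^ 2) :
    Even (∑ j, d j ^ 2) := by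
  have hd := even_sum_sq_sub_sum univ d
  have he := even_sum_sq_sub_sum univ e
  rw [Int.even_iff] at hd he hpar ⊢
  omega

section PowerSeries

variable {R : Type*} [CommRing R]

lemma PowerSeries.coeff_zero_mul (f g : R⟦X⟧) : coeff 0 (f * g) = coeff 0 f * coeff 0 g := by
  simp [coeff_mul]

lemma PowerSeries.coeff_two_mul (f g : R⟦X⟧) :
    coeff 2 (f * g) = coeff 0 f * coeff 2 g + coeff 1 f * coeff 1 g + coeff 2 f * coeff 0 g := by
  simp [coeff_mul, Finset.Nat.antidiagonal_succ]
  ring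

lemma PowerSeries.coeff_prod_of_coeff_zero_eq_one {ι : Type*} (s : Finset ι) (F : ι → R⟦X⟧)
    (h0 : ∀ i ∈ s, coeff 0 (F i) = 1) (h1 : ∀ i ∈ s, coeff 1 (F i) = 0) :
    coeff 0 (∏ i ∈ s, F i) = 1 ∧ coeff 1 (∏ i ∈ s, F i) = 0 ∧
      coeff 2 (∏ i ∈ s, F i) = ∑ i ∈ s, coeff 2 (F i) := by
  induction s using Finset.cons_induction with
  | empty => simp [coeff_one]
  | cons a s ha ih =>
    obtain ⟨ih0, ih1, ih2⟩ := ih (fun i hi => h0 i (mem_cons_of_mem hi))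
      (fun i hi => h1 i (mem_cons_of_mem hi))
    have ha0 := h0 a (mem_cons_self a s)
    have ha1 := h1 a (mem_cons_self a s)
    rw [prod_cons, sum_cons, coeff_two_mul]
    refine ⟨?_, ?_, ?_⟩
    · simp [coeff_mul, ha0, ih0]
    · simp [coeff_mul, Finset.Nat.antidiagonal_succ, ha0, ha1, ih0, ih1]
    · rw [ha0, ha1, ih0, ih1, ih2]
      ring

end PowerSeries

noncomputable def expSubst : LaurentPolynomial ℤ →ₐ[ℤ] ℚ⟦X⟧ :=
  AddMonoidAlgebra.lift ℤ ℚ⟦X⟧ ℤ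
    { toFun n := rescale (n.toAdd : ℚ) (exp ℚ)
      map_one' := by simp
      map_mul' x y := by simp [exp_mul_exp_eq_exp_add] }

lemma expSubst_T (n : ℤ) : expSubst (T n) = rescale (n : ℚ) (exp ℚ) := by
  rw [expSubst, T, AddMonoidAlgebra.lift_single]
  exact one_smul ℤ _

lemma coeff_expSubst_T (n : ℤ) (i : ℕ) : coeff i (expSubst (T n)) = (n : ℚ) ^ i / i ! := by
  simp [expSubst_T, coeff_exp, div_eq_mul_inv]

/-- `sinh (a t) / (a t)` -/
noncomputable def sinhcSeries (a : ℚ) : ℚ⟦X⟧ :=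
  mk fun i => if Even i then a ^ i / (i + 1)! else 0

lemma coeff_zero_sinhcSeries (a : ℚ) : coeff 0 (sinhcSeries a) = 1 := by simp [sinhcSeries]

lemma coeff_one_sinhcSeries (a : ℚ) : coeff 1 (sinhcSeries a) = 0 := by simp [sinhcSeries]

lemma coeff_two_sinhcSeries (a : ℚ) : coeff 2 (sinhcSeries a) = a ^ 2 / 6 := by
  simp [sinhcSeries, Nat.factorial]
  norm_num

lemma coeff_prod_sinhcSeries {ι : Type*} (s : Finset ι) (a : ι → ℚ) :
    coeff 0 (∏ i ∈ s, sinhcSeries (a i)) = 1 ∧ coeff 1 (∏ i ∈ s, sinhcSeries (a i)) = 0 ∧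
      coeff 2 (∏ i ∈ s, sinhcSeries (a i)) = (∑ i ∈ s, a i ^ 2) / 6 := by
  obtain ⟨h0, h1, h2⟩ := coeff_prod_of_coeff_zero_eq_one s (fun i => sinhcSeries (a i))
    (fun i _ => coeff_zero_sinhcSeries _) (fun i _ => coeff_one_sinhcSeries _)
  exact ⟨h0, h1, by simp only [h2, coeff_two_sinhcSeries, sum_div]⟩

lemma expSubst_T_sub_T_neg (n : ℤ) :
    expSubst (T n - T (-n)) = X * PowerSeries.C (2 * (n : ℚ)) * sinhcSeries n := by
  ext (_ | i)
  · rw [mul_assoc, coeff_zero_X_mul, map_sub, map_sub, coeff_expSubst_T, coeff_expSubst_T]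
    simp
  · rw [mul_assoc, coeff_succ_X_mul, coeff_C_mul, sinhcSeries, coeff_mk, map_sub, map_sub,
      coeff_expSubst_T, coeff_expSubst_T]
    rcases Nat.even_or_odd i with hi | hi
    · rw [if_pos hi, Int.cast_neg, hi.add_one.neg_pow, pow_succ]
      ring
    · rw [if_neg (Nat.not_even_iff_odd.mpr hi), Int.cast_neg, hi.add_one.neg_pow]
      ring

lemma expSubst_sinhProd {ι : Type*} [Fintype ι] (a : ι → ℤ) :
    expSubst (sinhProd a) =
      X ^ Fintype.card ι * PowerSeries.C (∏ j, 2 * (a j : ℚ)) * ∏ j, sinhcSeries (a j) := by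
  rw [sinhProd, map_prod, prod_congr rfl fun j _ => expSubst_T_sub_T_neg (a j), prod_mul_distrib,
    prod_mul_distrib, prod_const, Finset.card_univ, map_prod]

lemma coeff_eq_of_C_mul_expSubst_sinhProd_eq {ι : Type*} [Fintype ι] (M : ℚ) (B : ℚ⟦X⟧)
    (c d : ι → ℤ) (hd : ∀ j, d j ≠ 0)
    (h : PowerSeries.C M * expSubst (sinhProd fun j => c j * d j) = B * expSubst (sinhProd d)) :
    M * ∏ j, (c j : ℚ) = coeff 0 B ∧
      M * (∏ j, (c j : ℚ)) * ∑ j, ((c j * d j : ℤ) : ℚ) ^ 2 =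
        coeff 0 B * ∑ j, (d j : ℚ) ^ 2 + 6 * coeff 2 B := by
  obtain ⟨hcd0, -, hcd2⟩ := coeff_prod_sinhcSeries univ fun j => ((c j * d j : ℤ) : ℚ)
  obtain ⟨hd0, hd1, hd2⟩ := coeff_prod_sinhcSeries univ fun j => (d j : ℚ)
  have hD : X ^ Fintype.card ι * PowerSeries.C (∏ j, 2 * (d j : ℚ)) ≠ 0 := by
    refine mul_ne_zero (pow_ne_zero _ X_ne_zero) ?_
    rw [ne_eq, map_eq_zero_iff _ C_injective]
    exact prod_ne_zero_iff.mpr fun j _ => by simpa using hd j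
  have hprod : ∏ j, 2 * ((c j * d j : ℤ) : ℚ) = (∏ j, (c j : ℚ)) * ∏ j, 2 * (d j : ℚ) := by
    rw [← prod_mul_distrib]
    exact prod_congr rfl fun j _ => by push_cast; ring
  rw [expSubst_sinhProd, expSubst_sinhProd, hprod, map_mul] at h
  have hcancel : PowerSeries.C (M * ∏ j, (c j : ℚ)) * ∏ j, sinhcSeries ((c j * d j : ℤ) : ℚ) =
      B * ∏ j, sinhcSeries (d j : ℚ) := by
    refine mul_left_cancel₀ hD ?_
    rw [map_mul]
    linear_combination h
  constructor
  · have h0 := congrArg (coeff 0) hcancel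
    rw [coeff_C_mul, coeff_zero_mul, hcd0, hd0] at h0
    linear_combination h0
  · have h2 := congrArg (coeff 2) hcancel
    rw [coeff_C_mul, coeff_two_mul, hcd2, hd0, hd1, hd2] at h2
    linear_combination 6 * h2

lemma coeff_zero_expSubst_rLaurent (a : ℤ) : coeff 0 (expSubst (rLaurent a)) = 2 := by
  rw [rLaurent, map_add, map_add, coeff_expSubst_T, coeff_expSubst_T]
  norm_num

lemma coeff_one_expSubst_rLaurent (a : ℤ) : coeff 1 (expSubst (rLaurent a)) = 0 := by
  simp [rLaurent, coeff_expSubst_T]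

lemma coeff_two_expSubst_rLaurent (a : ℤ) :
    coeff 2 (expSubst (rLaurent a)) = 4 * (a : ℚ) ^ 2 := by
  simp [rLaurent, coeff_expSubst_T]
  ring

section Sigma

variable {ℓ : ℕ} (d : Fin ℓ → ℤ)

lemma coeff_zero_expSubst_sigma1 : coeff 0 (expSubst (sigma1 d)) = 2 * ℓ := by
  simp [sigma1, coeff_zero_expSubst_rLaurent, mul_comm]

lemma coeff_two_expSubst_sigma1 :
    coeff 2 (expSubst (sigma1 d)) = 4 * ∑ j, (d j : ℚ) ^ 2 := by
  simp [sigma1, coeff_two_expSubst_rLaurent, mul_sum]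

lemma coeff_zero_expSubst_sigma2 : coeff 0 (expSubst (sigma2 d)) = 2 * ℓ * (ℓ - 1) := by
  have hpair : ∀ i j, coeff 0 (expSubst (rLaurent (d i) * rLaurent (d j))) = 2 + 2 := by
    intro i j
    rw [map_mul, coeff_zero_mul, coeff_zero_expSubst_rLaurent, coeff_zero_expSubst_rLaurent]
    norm_num
  have h := Fin.sum_sum_filter_lt_add_add_sum (fun _ : Fin ℓ => (2 : ℚ))
  simp only [sigma2, map_sum, hpair]
  simp only [sum_const, Finset.card_univ, Fintype.card_fin, nsmul_eq_mul] at h ⊢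
  linear_combination h

lemma coeff_two_expSubst_sigma2 :
    coeff 2 (expSubst (sigma2 d)) = 8 * (ℓ - 1) * ∑ j, (d j : ℚ) ^ 2 := by
  have hpair : ∀ i j, coeff 2 (expSubst (rLaurent (d i) * rLaurent (d j))) =
      8 * (d i : ℚ) ^ 2 + 8 * (d j : ℚ) ^ 2 := by
    intro i j
    rw [map_mul, coeff_two_mul, coeff_zero_expSubst_rLaurent, coeff_zero_expSubst_rLaurent,
      coeff_one_expSubst_rLaurent, coeff_two_expSubst_rLaurent, coeff_two_expSubst_rLaurent]
    ring
  have h := Fin.sum_sum_filter_lt_add_add_sum (fun j => 8 * (d j : ℚ) ^ 2)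
  simp only [sigma2, map_sum, hpair]
  rw [nsmul_eq_mul, ← mul_sum] at h
  linear_combination h

variable {k : ℤ} (hkℓ : k + ℓ = 24)
include hkℓ

lemma coeff_zero_expSubst_brFactor : coeff 0 (expSubst (brFactor k d)) = 1080 := by
  have hkℓ' : (k : ℚ) + ℓ = 24 := by exact_mod_cast hkℓ
  simp only [brFactor, map_add, map_mul, map_intCast]
  rw [← map_intCast (PowerSeries.C (R := ℚ)), ← map_intCast (PowerSeries.C (R := ℚ)),
    coeff_C_mul, coeff_C, coeff_zero_expSubst_sigma2, coeff_zero_expSubst_sigma1, if_pos rfl]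
  push_cast
  linear_combination (2 * ((k : ℚ) + ℓ) + 45) * hkℓ'

lemma coeff_two_expSubst_brFactor :
    coeff 2 (expSubst (brFactor k d)) = 180 * ∑ j, (d j : ℚ) ^ 2 := by
  have hkℓ' : (k : ℚ) + ℓ = 24 := by exact_mod_cast hkℓ
  simp only [brFactor, map_add, map_mul, map_intCast]
  rw [← map_intCast (PowerSeries.C (R := ℚ)), ← map_intCast (PowerSeries.C (R := ℚ)),
    coeff_C_mul, coeff_C, coeff_two_expSubst_sigma2, coeff_two_expSubst_sigma1, if_neg two_ne_zero]
  push_cast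
  linear_combination 8 * (∑ j, (d j : ℚ) ^ 2) * hkℓ'

lemma mul_prod_eq_and_sum_sq_eq_of_sinhProd_eq (m : ℕ) (c : Fin ℓ → ℤ) (hd : ∀ j, d j ≠ 0)
    (h : (m : LaurentPolynomial ℤ) * sinhProd (fun j => c j * d j) = brFactor k d * sinhProd d) :
    (m : ℚ) * ∏ j, (c j : ℚ) = 1080 ∧ ∑ j, (c j * d j) ^ 2 = 2 * ∑ j, d j ^ 2 := by
  have hE := congrArg expSubst h
  rw [map_mul, map_mul, map_natCast, ← map_natCast PowerSeries.C] at hE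
  obtain ⟨hmc, hsq⟩ := coeff_eq_of_C_mul_expSubst_sinhProd_eq _ _ c d hd hE
  rw [coeff_zero_expSubst_brFactor d hkℓ] at hmc hsq
  rw [coeff_two_expSubst_brFactor d hkℓ, hmc] at hsq
  refine ⟨hmc, ?_⟩
  have hsq' : ∑ j, ((c j * d j : ℤ) : ℚ) ^ 2 = 2 * ∑ j, (d j : ℚ) ^ 2 := by
    linear_combination hsq / 1080
  exact_mod_cast hsq'

end Sigma

noncomputable def negT : LaurentPolynomial ℤ →ₐ[ℤ] LaurentPolynomial ℤ :=
  AddMonoidAlgebra.lift ℤ _ ℤ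
    { toFun n := (n.toAdd.negOnePow : ℤ) • T n.toAdd
      map_one' := by simp
      map_mul' x y := by
        simp only [toAdd_mul, Int.negOnePow_add, Units.val_mul, T_add, mul_smul_mul_comm] }

lemma negT_T (n : ℤ) : negT (T n) = (n.negOnePow : ℤ) • T n := by
  rw [negT, T, AddMonoidAlgebra.lift_single]
  exact one_smul ℤ _

lemma negT_sinhProd {ι : Type*} [Fintype ι] (e : ι → ℤ) :
    negT (sinhProd e) = ((∑ j, e j).negOnePow : ℤ) • sinhProd e := by
  have key : ∀ s : Finset ι, negT (∏ j ∈ s, (T (e j) - T (-e j))) =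
      ((∑ j ∈ s, e j).negOnePow : ℤ) • ∏ j ∈ s, (T (e j) - T (-e j)) := by
    intro s
    induction s using Finset.cons_induction with
    | empty => simp
    | cons a s ha ih =>
      rw [prod_cons, map_mul, ih, map_sub, negT_T, negT_T, Int.negOnePow_neg, ← smul_sub,
        sum_cons, Int.negOnePow_add, Units.val_mul, smul_mul_smul_comm]
  exact key univ

lemma negT_brFactor {ℓ : ℕ} (k : ℤ) (d : Fin ℓ → ℤ) : negT (brFactor k d) = brFactor k d := by
  have hr : ∀ a, negT (rLaurent a) = rLaurent a := fun a => by
    simp [rLaurent, negT_T, Int.negOnePow_two_mul]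
  simp only [brFactor, sigma1, sigma2, map_add, map_mul, map_sum, map_intCast, hr]

lemma sinhProd_ne_zero {ι : Type*} [Fintype ι] {e : ι → ℤ} (he : ∀ j, e j ≠ 0) :
    sinhProd e ≠ 0 := by
  refine prod_ne_zero_iff.mpr fun j _ h => ?_
  have hcoeff := congrArg (fun p : LaurentPolynomial ℤ => p.coeff (e j)) h
  have hne : -e j ≠ e j := by have := he j; omega
  simp [hne] at hcoeff

lemma even_sum_sub_sum_of_mul_sinhProd_eq {ι : Type*} [Fintype ι] {A B : LaurentPolynomial ℤ}
    (hA : negT A = A) (hB : negT B = B) (e d : ι → ℤ) (hne : A * sinhProd e ≠ 0)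
    (h : A * sinhProd e = B * sinhProd d) :
    Even (∑ j, e j - ∑ j, d j) := by
  have hsign := congrArg negT h
  rw [map_mul, map_mul, hA, hB, negT_sinhProd, negT_sinhProd, mul_smul_comm, mul_smul_comm, ← h]
    at hsign
  rw [← Int.negOnePow_eq_iff]
  exact Units.ext (smul_left_injective ℤ hne hsign)

lemma LaurentPolynomial.natCast_ne_zero {m : ℕ} (hm : m ≠ 0) : (m : LaurentPolynomial ℤ) ≠ 0 := by
  intro h
  have h0 := congrArg (fun p : LaurentPolynomial ℤ => p.coeff 0) ((map_natCast C m).symm.trans h)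
  simp [hm] at h0

theorem stmt_2_general (ℓ : ℕ) (hℓ24 : ℓ ≤ 24) (k : ℕ) (hk : k = 24 - ℓ)
    (m : ℕ) (c d : Fin ℓ → ℕ)
    (hd : ∀ j, 1 ≤ d j)
    (hBR : (m : LaurentPolynomial ℤ) *
        ∏ j, (T ((c j : ℤ) * (d j : ℤ)) - T (-((c j : ℤ) * (d j : ℤ)))) =
      (sigma2 (fun j => (d j : ℤ)) +
          ((2 * (k : ℤ) - 1 : ℤ) : LaurentPolynomial ℤ) * sigma1 (fun j => (d j : ℤ)) +
          ((2 * (k : ℤ) ^ 2 - 3 * (k : ℤ) + (ℓ : ℤ) : ℤ) : LaurentPolynomial ℤ)) *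
        ∏ j, (T ((d j : ℤ)) - T (-(d j : ℤ)))) :
    Even (∑ j, (d j) ^ 2) ∧ ∃ N : ℕ, ∑ j, (d j) ^ 2 = 2 * N := by
  have hd0 : ∀ j, (d j : ℤ) ≠ 0 := fun j => by have := hd j; omega
  have hkℓ : (k : ℤ) + ℓ = 24 := by omega
  obtain ⟨hmc, hsq⟩ := mul_prod_eq_and_sum_sq_eq_of_sinhProd_eq _ hkℓ m _ hd0 hBR
  have hmc0 : (m : ℚ) * ∏ j, ((c j : ℤ) : ℚ) ≠ 0 := by rw [hmc]; norm_num
  have hne : (m : LaurentPolynomial ℤ) * sinhProd (fun j => (c j : ℤ) * d j) ≠ 0 := by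
    refine mul_ne_zero (natCast_ne_zero (by exact_mod_cast left_ne_zero_of_mul hmc0)) ?_
    refine sinhProd_ne_zero fun j => mul_ne_zero ?_ (hd0 j)
    exact_mod_cast prod_ne_zero_iff.mp (right_ne_zero_of_mul hmc0) j (mem_univ j)
  have hpar := even_sum_sub_sum_of_mul_sinhProd_eq (map_natCast negT m) (negT_brFactor _ _) _ _
    hne hBR
  obtain ⟨N, hN⟩ := (Int.even_coe_nat _).mp (by
    exact_mod_cast even_sum_sq_of_sum_sq_eq_two_mul _ _ hpar hsq)
  exact ⟨⟨N, hN⟩, N, by omega⟩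

theorem stmt_2 (ℓ : ℕ) (hℓ : 1 ≤ ℓ) (hℓ24 : ℓ ≤ 24) (k : ℕ) (hk : k = 24 - ℓ)
    (m : ℕ) (hm : 1 ≤ m) (c d : Fin ℓ → ℕ)
    (hc : ∀ j, 1 ≤ c j) (hd : ∀ j, 1 ≤ d j)
    (hBR : (m : LaurentPolynomial ℤ) *
        ∏ j, (T ((c j : ℤ) * (d j : ℤ)) - T (-((c j : ℤ) * (d j : ℤ)))) =
      (sigma2 (fun j => (d j : ℤ)) +
          ((2 * (k : ℤ) - 1 : ℤ) : LaurentPolynomial ℤ) * sigma1 (fun j => (d j : ℤ)) +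
          ((2 * (k : ℤ) ^ 2 - 3 * (k : ℤ) + (ℓ : ℤ) : ℤ) : LaurentPolynomial ℤ)) *
        ∏ j, (T ((d j : ℤ)) - T (-(d j : ℤ)))) :
    Even (∑ j, (d j) ^ 2) ∧ ∃ N : ℕ, ∑ j, (d j) ^ 2 = 2 * N :=
  stmt_2_general ℓ hℓ24 k hk m c d hd hBR
end

section
/- Let c* = (5,3,3,3,2,2,2,1,1,1,1,1,1,1,1,1,1,1,1,1,1,1,1,1) ∈ ℕ^{24}. For all α, β ∈ ℤ, the tuple d = Fam2(α,β) = (β, α+β, α, α−β, α+2β, α−2β, 2β, 2α, 2α+2β, 2α+β, 2α−β, 2α−2β, α+3β, α+β, α, 4β, α−β, 3β, 2β, α−3β, β, β, 0, 0) ∈ ℤ^{24} satisfies equation (BR24) with respect to c*. -/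
open LaurentPolynomial Finset

/-- Equation (BR24). -/
noncomputable def BR24 (c : Fin 24 → ℕ) (d : Fin 24 → ℤ) : Prop :=
  ((∏ j ∈ univ.filter (fun j => d j = 0), c j : ℕ) : LaurentPolynomial ℤ) *
      ∏ j ∈ univ.filter (fun j => d j ≠ 0),
        (T ((c j : ℤ) * d j) - T (-((c j : ℤ) * d j))) =
    (sigma2 d - sigma1 d + 24) *
      ∏ j ∈ univ.filter (fun j => d j ≠ 0), (T (d j) - T (-(d j)))

/-- The inflation vector `c* = (5,3,3,3,2,2,2,1,…,1)`. -/
def cstar : Fin 24 → ℕ :=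
  ![5, 3, 3, 3, 2, 2, 2, 1, 1, 1, 1, 1, 1, 1, 1, 1, 1, 1, 1, 1, 1, 1, 1, 1]

/-- The family `Fam2`. -/
def Fam2 (α β : ℤ) : Fin 24 → ℤ :=
  ![β, α + β, α, α - β, α + 2 * β, α - 2 * β, 2 * β, 2 * α, 2 * α + 2 * β,
    2 * α + β, 2 * α - β, 2 * α - 2 * β, α + 3 * β, α + β, α, 4 * β, α - β, 3 * β, 2 * β,
    α - 3 * β, β, β, 0, 0]

/-!
With the quantum integer `[c]_d = ∑_{k<c} X^{d(c-1-2k)}` one has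
`X^{cd} - X^{-cd} = [c]_d (X^d - X^{-d})`, and `[c]_0 = c`. Hence the left side of (BR24) is
`(∏_j [c_j]_{d_j}) · ∏_{d_j ≠ 0} (X^{d_j} - X^{-d_j})`, and it suffices that
`∏_j [c*_j]_{d_j} = σ₂(d) - σ₁(d) + 24` for `d = Fam2(α, β)`. Both sides are Laurent polynomials
in `X^α, X^β`; peeling off the coordinates of `d` one at a time and expanding into monomials
`X^{aα + bβ}` shows that they agree.
-/

noncomputable def quantumInt (c : ℕ) (d : ℤ) : LaurentPolynomial ℤ :=
  ∑ k ∈ range c, T (d * ((c : ℤ) - 1 - 2 * k))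

theorem quantumInt_zero_right (c : ℕ) : quantumInt c 0 = c := by
  simp [quantumInt]

theorem quantumInt_succ (c : ℕ) (d : ℤ) :
    quantumInt (c + 1) d = T (c * d) + T (-d) * quantumInt c d := by
  rw [quantumInt, sum_range_succ', quantumInt, mul_sum, add_comm]
  congr 1
  · push_cast
    ring_nf
  · refine sum_congr rfl fun k _ => ?_
    rw [← T_add]
    push_cast
    ring_nf

theorem T_sub_T_neg_eq_quantumInt_mul (c : ℕ) (d : ℤ) :
    T (c * d) - T (-(c * d)) = quantumInt c d * (T d - T (-d)) := by
  induction c with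
  | zero => simp [quantumInt]
  | succ c ih =>
    rw [quantumInt_succ, add_mul, mul_assoc, ← ih]
    simp only [mul_sub, ← T_add]
    push_cast
    ring_nf

theorem BR24_of_prod_quantumInt_eq {c : Fin 24 → ℕ} {d : Fin 24 → ℤ}
    (h : ∏ j, quantumInt (c j) (d j) = sigma2 d - sigma1 d + 24) : BR24 c d := by
  rw [BR24, ← h, ← prod_filter_mul_prod_filter_not univ (fun j => d j = 0), mul_assoc,
    ← prod_mul_distrib]
  congr 1
  · push_cast
    exact prod_congr rfl fun j hj => by rw [(mem_filter.1 hj).2, quantumInt_zero_right]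
  · exact prod_congr rfl fun j _ => T_sub_T_neg_eq_quantumInt_mul _ _

theorem sigma1_cons {ℓ : ℕ} (a : ℤ) (d : Fin ℓ → ℤ) :
    sigma1 (Fin.cons a d : Fin (ℓ + 1) → ℤ) = rLaurent a + sigma1 d := by
  simp [sigma1, Fin.sum_univ_succ]

theorem sigma2_cons {ℓ : ℕ} (a : ℤ) (d : Fin ℓ → ℤ) :
    sigma2 (Fin.cons a d : Fin (ℓ + 1) → ℤ) = rLaurent a * sigma1 d + sigma2 d := by
  simp [sigma2, sigma1, Fin.sum_univ_succ, sum_filter, mul_sum]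

theorem sigma1_fin_zero (d : Fin 0 → ℤ) : sigma1 d = 0 := by
  simp [sigma1]

theorem sigma2_fin_zero (d : Fin 0 → ℤ) : sigma2 d = 0 := by
  simp [sigma2]

set_option maxHeartbeats 400000 in
theorem prod_quantumInt_cstar_Fam2 (α β : ℤ) :
    ∏ j, quantumInt (cstar j) (Fam2 α β j) = sigma2 (Fam2 α β) - sigma1 (Fam2 α β) + 24 := by
  simp only [Fam2, Matrix.vecCons, sigma1_cons, sigma2_cons, sigma1_fin_zero, sigma2_fin_zero,
    cstar, Fin.prod_univ_succ, Fin.prod_univ_zero, Fin.cons_zero, Fin.cons_succ, quantumInt,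
    sum_range_succ, sum_range_zero]
  norm_num [rLaurent, T_zero]
  simp only [mul_add, add_mul, sub_mul, mul_sub, ← T_add, one_mul]
  ring_nf
  simp only [T_zero]
  ring_nf

theorem stmt_9 (α β : ℤ) : BR24 cstar (Fam2 α β) :=
  BR24_of_prod_quantumInt_eq (prod_quantumInt_cstar_Fam2 α β)
end

section
/- For every real z with 0 < |z| < π, one has log( sin(z) / z ) = ∑_{n=1}^{∞} ((−1)^{n+1}/(2n)!) · ζ(1−2n) · (2z)^{2n}, where ζ(1−2n) = −B_{2n}/(2n) is the value of the Riemann zeta function at 1−2n (B_{2n} the 2n-th Bernoulli number); in particular the series on the right converges to the left-hand side. -/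
/-!
Take logarithms in Euler's product `sin z / z = ∏ₖ (1 - z² / (π² (k+1)²))` and expand each
`log (1 - aₖ)` as `-∑ₘ aₖ^(m+1) / (m+1)`. All terms of the resulting double series have the same
sign, so it may be summed in the other order; summing over `k` first produces the even zeta values
`ζ(2(m+1))`, and Euler's formula for these in terms of Bernoulli numbers gives the coefficients.
-/

open Real Filter Topology

theorem hasSum_of_hasSum_rows_of_nonneg {β γ : Type*} {f : β → γ → ℝ} (hf : ∀ b c, 0 ≤ f b c)
    {row : β → ℝ} {col : γ → ℝ} {s : ℝ} (hrow : ∀ b, HasSum (f b) (row b)) (hs : HasSum row s)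
    (hcol : ∀ c, HasSum (fun b ↦ f b c) (col c)) : HasSum col s := by
  have hsum : Summable (Function.uncurry f) := by
    refine (summable_prod_of_nonneg fun p ↦ hf p.1 p.2).2 ⟨fun b ↦ (hrow b).summable, ?_⟩
    exact hs.summable.congr fun b ↦ (hrow b).tsum_eq.symm
  have htotal : HasSum (Function.uncurry f) s := by
    have h := hsum.hasSum
    rwa [(h.prod_fiberwise hrow).unique hs] at h
  have hswap : HasSum (fun p : γ × β ↦ f p.2 p.1) s := (Equiv.prodComm γ β).hasSum_iff.2 htotal
  exact hswap.prod_fiberwise hcol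

theorem hasSum_log_of_tendsto_prod {f : ℕ → ℝ} {L : ℝ} (hf₀ : ∀ k, 0 < f k) (hf₁ : ∀ k, f k ≤ 1)
    (hL : 0 < L) (h : Tendsto (fun n ↦ ∏ k ∈ Finset.range n, f k) atTop (𝓝 L)) :
    HasSum (fun k ↦ log (f k)) (log L) := by
  have hlog : Tendsto (fun n ↦ ∑ k ∈ Finset.range n, log (f k)) atTop (𝓝 (log L)) :=
    ((continuousAt_log hL.ne').tendsto.comp h).congr fun n ↦
      log_prod fun k _ ↦ (hf₀ k).ne'
  have hneg : HasSum (fun k ↦ -log (f k)) (-log L) := by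
    rw [hasSum_iff_tendsto_nat_of_nonneg fun k ↦ neg_nonneg.2 (log_nonpos (hf₀ k).le (hf₁ k))]
    simpa only [Finset.sum_neg_distrib] using hlog.neg
  simpa only [neg_neg] using hneg.neg

theorem Real.sin_div_self_pos {z : ℝ} (h₀ : 0 < |z|) (hπ : |z| < π) : 0 < sin z / z := by
  have h : sin z / z = sin |z| / |z| := by
    rcases abs_cases z with ⟨hz, -⟩ | ⟨hz, -⟩ <;> simp [hz, sin_neg, neg_div_neg_eq]
  rw [h]
  exact div_pos (sin_pos_of_pos_of_lt_pi h₀ hπ) h₀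

theorem Real.abs_div_pi_lt_one {z : ℝ} (hπ : |z| < π) : |z / π| < 1 := by
  rwa [abs_div, abs_of_pos pi_pos, div_lt_one pi_pos]

theorem abs_sq_div_succ_sq_lt_one {x : ℝ} (hx : |x| < 1) (k : ℕ) :
    |x ^ 2 / ((k : ℝ) + 1) ^ 2| < 1 := by
  have hk : (1 : ℝ) ≤ ((k : ℝ) + 1) ^ 2 := one_le_pow₀ (by simp)
  rw [abs_of_nonneg (by positivity), div_lt_one (by positivity)]
  calc x ^ 2 = |x| ^ 2 := (sq_abs x).symm
    _ < 1 := by nlinarith [abs_nonneg x]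
    _ ≤ _ := hk

theorem Real.hasSum_log_one_sub_euler_sin_prod {z : ℝ} (h₀ : 0 < |z|) (hπ : |z| < π) :
    HasSum (fun k : ℕ ↦ log (1 - (z / π) ^ 2 / ((k : ℝ) + 1) ^ 2)) (log (sin z / z)) := by
  have hz : z ≠ 0 := abs_pos.1 h₀
  refine hasSum_log_of_tendsto_prod
    (fun k ↦ sub_pos.2 (lt_of_abs_lt (abs_sq_div_succ_sq_lt_one (abs_div_pi_lt_one hπ) k)))
    (fun k ↦ sub_le_self _ (by positivity)) (sin_div_self_pos h₀ hπ) ?_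
  have hprod := (tendsto_euler_sin_prod (z / π)).div_const z
  rw [mul_div_cancel₀ z pi_ne_zero] at hprod
  exact hprod.congr fun n ↦ mul_div_cancel_left₀ _ hz

theorem hasSum_one_div_succ_pow_even {n : ℕ} (hn : n ≠ 0) :
    HasSum (fun k : ℕ ↦ 1 / ((k : ℝ) + 1) ^ (2 * n))
      ((-1 : ℝ) ^ (n + 1) * 2 ^ (2 * n - 1) * π ^ (2 * n) * bernoulli (2 * n) / (2 * n).factorial) := by
  have h := hasSum_zeta_nat hn
  rw [← hasSum_nat_add_iff' 1] at h
  simpa [hn] using h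

theorem hasSum_pow_div_of_euler_sin_prod (z : ℝ) (m : ℕ) :
    HasSum (fun k : ℕ ↦ ((z / π) ^ 2 / ((k : ℝ) + 1) ^ 2) ^ (m + 1) / (m + 1))
      (-(((-1 : ℝ) ^ ((m + 1) + 1) / (Nat.factorial (2 * (m + 1)))) *
          ((-(bernoulli (2 * (m + 1)) : ℝ)) / (2 * (m + 1))) *
          (2 * z) ^ (2 * (m + 1)))) := by
  have hterm : ∀ k : ℕ, ((z / π) ^ 2 / ((k : ℝ) + 1) ^ 2) ^ (m + 1) / (m + 1) =
      (z / π) ^ (2 * (m + 1)) / (m + 1) * (1 / ((k : ℝ) + 1) ^ (2 * (m + 1))) := fun k ↦ by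
    rw [div_pow, ← pow_mul, ← pow_mul]
    ring
  have htwo : (2 : ℝ) ^ (2 * (m + 1)) = 2 * 2 ^ (2 * (m + 1) - 1) := by
    rw [← pow_succ', Nat.sub_add_cancel (by omega)]
  have hval : -(((-1 : ℝ) ^ ((m + 1) + 1) / (Nat.factorial (2 * (m + 1)))) *
          ((-(bernoulli (2 * (m + 1)) : ℝ)) / (2 * (m + 1))) * (2 * z) ^ (2 * (m + 1))) =
      (z / π) ^ (2 * (m + 1)) / (m + 1) * ((-1 : ℝ) ^ (m + 1 + 1) * 2 ^ (2 * (m + 1) - 1) *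
        π ^ (2 * (m + 1)) * bernoulli (2 * (m + 1)) / (2 * (m + 1)).factorial) := by
    rw [mul_pow, htwo, div_pow]
    field_simp
  rw [funext hterm, hval]
  exact (hasSum_one_div_succ_pow_even (by omega)).mul_left _

/-- For `0 < |z| < π`,
`log(sin z / z) = ∑_{n ≥ 1} ((−1)^{n+1}/(2n)!) · ζ(1−2n) · (2z)^{2n}`,
where `ζ(1−2n) = −B_{2n}/(2n)`; the series converges to the left-hand side.
(The sum is indexed by `m : ℕ` with `n = m + 1`.) -/
theorem stmt_11 (z : ℝ) (h0 : 0 < |z|) (hπ : |z| < Real.pi) :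
    HasSum
      (fun m : ℕ =>
        ((-1 : ℝ) ^ ((m + 1) + 1) / (Nat.factorial (2 * (m + 1)))) *
          ((-(bernoulli (2 * (m + 1)) : ℝ)) / (2 * (m + 1))) *
          (2 * z) ^ (2 * (m + 1)))
      (Real.log (Real.sin z / z)) := by
  set a : ℕ → ℝ := fun k ↦ (z / π) ^ 2 / ((k : ℝ) + 1) ^ 2
  have hrows : ∀ k, HasSum (fun m : ℕ ↦ a k ^ (m + 1) / (m + 1)) (-log (1 - a k)) := fun k ↦
    hasSum_pow_div_log_of_abs_lt_one (abs_sq_div_succ_sq_lt_one (abs_div_pi_lt_one hπ) k)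
  have hsum := hasSum_of_hasSum_rows_of_nonneg (fun k m ↦ by positivity) hrows
    (hasSum_log_one_sub_euler_sin_prod h0 hπ).neg (hasSum_pow_div_of_euler_sin_prod z)
  simpa only [neg_neg] using hsum.neg
end

section
/- Let c ∈ ℕ^{24} with all c_j ≥ 1 and ∏_{j=1}^{24} c_j = 1080, and let d ∈ ℤ^{24}. For every real z with z ≠ 0 and |z| < 2π / max{ c_j·|d_j| : d_j ≠ 0 } (no upper bound required if all d_j = 0), one has (∏_{j: d_j = 0} c_j) · ∏_{j: d_j ≠ 0} [ sin( (1/2) c_j d_j z ) / sin( (1/2) d_j z ) ] = 1080 · exp( ∑_{n=1}^{∞} ((−1)ⁿ/(2n)!) · ζ(1−2n) · ( ∑_{j=1}^{24} (1 − c_j^{2n}) d_j^{2n} ) · z^{2n} ), where ζ(1−2n) = −B_{2n}/(2n) is the value of the Riemann zeta function at 1−2n; in particular the series in the exponent converges for such z. -/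
/-!
Taking logarithms in Euler's product `sin (π x) = π x ∏ₖ (1 - x² / k²)` and expanding each
`log (1 - x² / k²)` gives, for `|x| < 1`, an absolutely convergent double series; summing it the
other way round yields `log (sin (π x) / (π x)) = -∑ₙ ζ(2n) x²ⁿ / n`. Euler's formula for `ζ(2n)`
turns this into `log (sin (w/2) / (w/2)) = ∑ₙ (-1)ⁿ B₂ₙ / ((2n)! 2n) w²ⁿ` for `|w| < 2π`.
Each factor `sin (c d z / 2) / sin (d z / 2)` is then `c` times the exponential of a difference of
two such series, and the factors multiply to `∏ c_j = 1080` times the exponential of the sum.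
-/

open Finset Real Filter

lemma hasSum_one_div_nat_add_one_pow_two_mul {k : ℕ} (hk : k ≠ 0) :
    HasSum (fun n : ℕ => 1 / ((n : ℝ) + 1) ^ (2 * k))
      ((-1 : ℝ) ^ (k + 1) * 2 ^ (2 * k - 1) * π ^ (2 * k) * bernoulli (2 * k) /
        (2 * k).factorial) := by
  have h := (hasSum_nat_add_iff' 1).2 (hasSum_zeta_nat hk)
  simpa [zero_pow (mul_ne_zero two_ne_zero hk)] using h

lemma summable_pow_succ_div_sq_nat_add_one {x : ℝ} (hx : |x| < 1) :
    Summable fun p : ℕ × ℕ =>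
      (x ^ 2 / ((p.1 : ℝ) + 1) ^ 2) ^ (p.2 + 1) / ((p.2 : ℝ) + 1) := by
  have hx2 : x ^ 2 < 1 := (sq_lt_one_iff_abs_lt_one x).2 hx
  have hinv : Summable fun k : ℕ => 1 / ((k : ℝ) + 1) ^ 2 := by
    have := (summable_nat_add_iff (f := fun n : ℕ => 1 / (n : ℝ) ^ 2) 1).2
      (summable_one_div_nat_pow.2 one_lt_two)
    exact_mod_cast this
  have hgeom : Summable fun m : ℕ => (x ^ 2) ^ (m + 1) := by
    refine ((summable_geometric_of_lt_one (sq_nonneg x) hx2).mul_left (x ^ 2)).congr fun m => ?_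
    exact (pow_succ' _ _).symm
  refine Summable.of_nonneg_of_le (fun p => by positivity) (fun ⟨k, m⟩ => ?_)
    (hinv.mul_of_nonneg hgeom (fun _ => by positivity) (fun _ => by positivity))
  have hk : 1 ≤ ((k : ℝ) + 1) ^ 2 := one_le_pow₀ (by simp)
  calc (x ^ 2 / ((k : ℝ) + 1) ^ 2) ^ (m + 1) / ((m : ℝ) + 1)
      ≤ (x ^ 2 / ((k : ℝ) + 1) ^ 2) ^ (m + 1) := div_le_self (by positivity) (by simp)
    _ = (1 / ((k : ℝ) + 1) ^ 2) ^ (m + 1) * (x ^ 2) ^ (m + 1) := by rw [← mul_pow]; ring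
    _ ≤ 1 / ((k : ℝ) + 1) ^ 2 * (x ^ 2) ^ (m + 1) := by
      gcongr
      exact pow_le_of_le_one (by positivity) (by simpa using inv_le_one_of_one_le₀ hk)
        m.succ_ne_zero

lemma exists_hasSum_sin_pi_mul_eq_mul_exp {x : ℝ} (hx : |x| < 1) :
    ∃ L, HasSum (fun m : ℕ =>
        -(∑' k : ℕ, 1 / ((k : ℝ) + 1) ^ (2 * (m + 1))) / ((m : ℝ) + 1) * x ^ (2 * (m + 1))) L ∧
      sin (π * x) = π * x * exp L := by
  obtain ⟨A, hA⟩ := summable_pow_succ_div_sq_nat_add_one hx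
  have ht : ∀ k : ℕ, |x ^ 2 / ((k : ℝ) + 1) ^ 2| < 1 := fun k => by
    rw [abs_of_nonneg (by positivity), div_lt_one (by positivity)]
    calc x ^ 2 < 1 := (sq_lt_one_iff_abs_lt_one x).2 hx
      _ ≤ ((k : ℝ) + 1) ^ 2 := one_le_pow₀ (by simp)
  refine ⟨-A, ?_, ?_⟩
  · have hzeta : ∀ m : ℕ,
        HasSum (fun k : ℕ => (x ^ 2 / ((k : ℝ) + 1) ^ 2) ^ (m + 1) / ((m : ℝ) + 1))
          ((∑' k : ℕ, 1 / ((k : ℝ) + 1) ^ (2 * (m + 1))) *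
            (x ^ (2 * (m + 1)) / ((m : ℝ) + 1))) := by
      intro m
      have hs : Summable fun k : ℕ => 1 / ((k : ℝ) + 1) ^ (2 * (m + 1)) :=
        (hasSum_one_div_nat_add_one_pow_two_mul m.succ_ne_zero).summable
      refine (hs.hasSum.mul_right (x ^ (2 * (m + 1)) / ((m : ℝ) + 1))).congr_fun fun k => ?_
      rw [div_pow, ← pow_mul, ← pow_mul]
      ring
    have h := ((Equiv.prodComm ℕ ℕ).hasSum_iff.2 hA).prod_fiberwise hzeta
    exact h.neg.congr_fun fun m => by ring
  · have hlog : HasSum (fun k : ℕ => log (1 - x ^ 2 / ((k : ℝ) + 1) ^ 2)) (-A) := by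
      have hfiber : ∀ k : ℕ,
          HasSum (fun m : ℕ => (x ^ 2 / ((k : ℝ) + 1) ^ 2) ^ (m + 1) / ((m : ℝ) + 1))
            (-log (1 - x ^ 2 / ((k : ℝ) + 1) ^ 2)) := fun k =>
        hasSum_pow_div_log_of_abs_lt_one (ht k)
      simpa using (hA.prod_fiberwise hfiber).neg
    have hprod : Tendsto
        (fun n => π * x * ∏ k ∈ range n, exp (log (1 - x ^ 2 / ((k : ℝ) + 1) ^ 2)))
        atTop (nhds (π * x * exp (-A))) :=
      hlog.rexp.tendsto_prod_nat.const_mul (π * x)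
    refine tendsto_nhds_unique (tendsto_euler_sin_prod x) (hprod.congr fun n => ?_)
    refine congrArg _ (prod_congr rfl fun k _ => exp_log ?_)
    linarith [(abs_lt.1 (ht k)).2]

/-- The coefficient of `w ^ (2 * n)` in `log (sin (w / 2) / (w / 2))`. -/
noncomputable def logSinHalfCoeff (n : ℕ) : ℝ :=
  (-1) ^ n / (2 * n).factorial * (bernoulli (2 * n) / (2 * n))

lemma exists_hasSum_sin_half_eq_mul_exp {w : ℝ} (hw : |w| < 2 * π) :
    ∃ L, HasSum (fun m : ℕ => logSinHalfCoeff (m + 1) * w ^ (2 * (m + 1))) L ∧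
      sin (1 / 2 * w) = 1 / 2 * w * exp L := by
  have hx : |w / (2 * π)| < 1 := by
    rwa [abs_div, abs_of_pos (by positivity : (0 : ℝ) < 2 * π), div_lt_one (by positivity)]
  obtain ⟨L, hL, hsin⟩ := exists_hasSum_sin_pi_mul_eq_mul_exp hx
  have hπw : π * (w / (2 * π)) = 1 / 2 * w := by field_simp
  refine ⟨L, hL.congr_fun fun m => ?_, by rwa [hπw] at hsin⟩
  rw [(hasSum_one_div_nat_add_one_pow_two_mul m.succ_ne_zero).tsum_eq, logSinHalfCoeff,
    show 2 * (m + 1) - 1 = 2 * m + 1 by omega, show 2 * (m + 1) = 2 * m + 1 + 1 by omega,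
    div_pow, mul_pow, pow_succ (2 : ℝ) (2 * m + 1), pow_succ (-1 : ℝ) (m + 1)]
  field_simp
  push_cast
  ring

lemma exists_hasSum_sin_mul_div_sin {C w : ℝ} (hw₀ : w ≠ 0) (hw : |w| < 2 * π)
    (hCw : |C * w| < 2 * π) :
    ∃ L, HasSum (fun m : ℕ =>
        logSinHalfCoeff (m + 1) * ((C * w) ^ (2 * (m + 1)) - w ^ (2 * (m + 1)))) L ∧
      sin (1 / 2 * C * w) / sin (1 / 2 * w) = C * exp L := by
  obtain ⟨L₁, hL₁, hsin₁⟩ := exists_hasSum_sin_half_eq_mul_exp hw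
  obtain ⟨L₂, hL₂, hsin₂⟩ := exists_hasSum_sin_half_eq_mul_exp hCw
  refine ⟨L₂ - L₁, (hL₂.sub hL₁).congr_fun fun m => by ring, ?_⟩
  rw [mul_assoc, hsin₁, hsin₂, exp_sub]
  field_simp

theorem exists_hasSum_prod_sin_mul_div_sin {ι : Type*} [Fintype ι] (c d : ι → ℝ) {z : ℝ}
    (hz : z ≠ 0) (hd : ∀ j, d j ≠ 0 → |d j * z| < 2 * π ∧ |c j * d j * z| < 2 * π) :
    ∃ S, HasSum (fun m : ℕ => ∑ j, logSinHalfCoeff (m + 1) *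
        ((c j * d j * z) ^ (2 * (m + 1)) - (d j * z) ^ (2 * (m + 1)))) S ∧
      (∏ j ∈ univ.filter (fun j => d j = 0), c j) *
          ∏ j ∈ univ.filter (fun j => d j ≠ 0),
            sin (1 / 2 * c j * d j * z) / sin (1 / 2 * d j * z) =
        (∏ j, c j) * exp S := by
  have hfactor : ∀ j, ∃ L, HasSum (fun m : ℕ => logSinHalfCoeff (m + 1) *
        ((c j * d j * z) ^ (2 * (m + 1)) - (d j * z) ^ (2 * (m + 1)))) L ∧
      (if d j = 0 then c j else sin (1 / 2 * c j * d j * z) / sin (1 / 2 * d j * z)) =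
        c j * exp L := by
    intro j
    by_cases hdj : d j = 0
    · refine ⟨0, hasSum_zero.congr_fun fun m => by simp [hdj], by simp [hdj]⟩
    · obtain ⟨hw, hCw⟩ := hd j hdj
      rw [if_neg hdj]
      simpa only [← mul_assoc] using
        exists_hasSum_sin_mul_div_sin (C := c j) (mul_ne_zero hdj hz) hw (by rwa [← mul_assoc])
  choose L hL hval using hfactor
  refine ⟨∑ j, L j, hasSum_sum (f := fun j m => logSinHalfCoeff (m + 1) *
    ((c j * d j * z) ^ (2 * (m + 1)) - (d j * z) ^ (2 * (m + 1)))) fun j _ => hL j, ?_⟩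
  calc _ = ∏ j, (if d j = 0 then c j else sin (1 / 2 * c j * d j * z) / sin (1 / 2 * d j * z)) :=
        (prod_ite _ _).symm
    _ = ∏ j, c j * exp (L j) := prod_congr rfl fun j _ => hval j
    _ = (∏ j, c j) * exp (∑ j, L j) := by rw [exp_sum, prod_mul_distrib]

/-- For `c ∈ ℕ²⁴` with all `c_j ≥ 1` and `∏ c_j = 1080`, `d ∈ ℤ²⁴`, and real
`z ≠ 0` with `|z| < 2π/(c_j |d_j|)` for every `j` with `d_j ≠ 0`:
`(∏_{j : d_j = 0} c_j) ∏_{j : d_j ≠ 0} sin(½ c_j d_j z)/sin(½ d_j z)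
  = 1080 · exp( ∑_{n ≥ 1} ((−1)ⁿ/(2n)!) ζ(1−2n) (∑_j (1 − c_j^{2n}) d_j^{2n}) z^{2n} )`,
where `ζ(1−2n) = −B_{2n}/(2n)`; in particular the series in the exponent converges.
(The sum is indexed by `m : ℕ` with `n = m + 1`.) -/
theorem stmt_13 (c : Fin 24 → ℕ) (hc : ∀ j, 1 ≤ c j) (hprod : ∏ j, c j = 1080)
    (d : Fin 24 → ℤ) (z : ℝ) (hz : z ≠ 0)
    (hbound : ∀ j, d j ≠ 0 → |z| < 2 * Real.pi / ((c j : ℝ) * |(d j : ℝ)|)) :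
    ∃ S : ℝ,
      HasSum
        (fun m : ℕ =>
          ((-1 : ℝ) ^ (m + 1) / (Nat.factorial (2 * (m + 1)))) *
            ((-(bernoulli (2 * (m + 1)) : ℝ)) / (2 * (m + 1))) *
            (∑ j, ((1 : ℝ) - (c j : ℝ) ^ (2 * (m + 1))) * (d j : ℝ) ^ (2 * (m + 1))) *
            z ^ (2 * (m + 1))) S ∧
      (∏ j ∈ univ.filter (fun j => d j = 0), (c j : ℝ)) *
          ∏ j ∈ univ.filter (fun j => d j ≠ 0),
            Real.sin ((1 / 2) * (c j : ℝ) * (d j : ℝ) * z) /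
              Real.sin ((1 / 2) * (d j : ℝ) * z) =
        1080 * Real.exp S := by
  have hd : ∀ j, (d j : ℝ) ≠ 0 →
      |(d j : ℝ) * z| < 2 * π ∧ |(c j : ℝ) * d j * z| < 2 * π := by
    intro j hdj
    have hc₁ : (1 : ℝ) ≤ c j := by exact_mod_cast hc j
    have hc₀ : (0 : ℝ) < c j := by linarith
    have hcdz : |(c j : ℝ) * d j * z| < 2 * π := by
      rw [abs_mul, abs_mul, abs_of_pos hc₀, mul_comm]
      exact (lt_div_iff₀ (mul_pos hc₀ (abs_pos.2 hdj))).1 (hbound j (by exact_mod_cast hdj))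
    refine ⟨lt_of_le_of_lt ?_ hcdz, hcdz⟩
    rw [mul_assoc, abs_mul (c j : ℝ), abs_of_pos hc₀]
    exact le_mul_of_one_le_left (abs_nonneg _) hc₁
  obtain ⟨S, hS, hprod_eq⟩ :=
    exists_hasSum_prod_sin_mul_div_sin (fun j => (c j : ℝ)) (fun j => (d j : ℝ)) hz hd
  refine ⟨S, ?_, ?_⟩
  · refine hS.congr_fun fun m => ?_
    simp only [logSinHalfCoeff, mul_sum, sum_mul]
    refine sum_congr rfl fun j _ => ?_
    push_cast
    ring
  · simpa only [Int.cast_eq_zero, ne_eq, ← Nat.cast_prod, hprod, Nat.cast_ofNat] using hprod_eq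
end

section
/- Let k ≥ 0 and ℓ ≥ 1 be integers and let d ∈ ℕ^{ℓ} be a tuple of positive integers. For every integer M ≥ 2, consider the polynomial P_M = ∏_{n=1}^{M} [ (1 − q^n)^{2k} · ∏_{j=1}^{ℓ} (1 − q^n X^{2d_j})(1 − q^n X^{−2d_j}) ], regarded as a power series in q with coefficients in ℤ[X, X⁻¹]. Then: the coefficient of q⁰ in P_M is 1; the coefficient of q¹ in P_M is −(2k + σ₁(d)); and the coefficient of q² in P_M is σ₂(d) + (2k − 1)·σ₁(d) + 2k² − 3k + ℓ. -/
/-!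
Every factor of `P_M` has constant term `1`, and the factors with `n ≥ 3` are `≡ 1 mod q³`, so up
to `q²` only the factors `n = 1, 2` matter. For a product of series with constant term `1`, the
`q`-coefficient is the sum of the `q`-coefficients of the factors, and the `q²`-coefficient is the
sum of their `q²`-coefficients plus the pairwise products of their `q`-coefficients. In the factor
`n = 1`, each pair `(1 - q X^{2d_j})(1 - q X^{-2d_j})` contributes `X^{2d_j} X^{-2d_j} = 1` to the
`q²`-coefficient, which accounts for the summand `ℓ`.
-/

open LaurentPolynomial Finset

/-- The truncated theta-block product
`P_M = ∏_{n=1}^{M} [(1 − qⁿ)^{2k} ∏_j (1 − qⁿ X^{2d_j})(1 − qⁿ X^{−2d_j})]`,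
a power series in `q` with coefficients in `ℤ[X, X⁻¹]`. -/
noncomputable def thetaProd (k : ℕ) {ℓ : ℕ} (d : Fin ℓ → ℕ) (M : ℕ) :
    PowerSeries (LaurentPolynomial ℤ) :=
  ∏ n ∈ Finset.Icc 1 M,
    ((1 - PowerSeries.X ^ n) ^ (2 * k) *
      ∏ j, ((1 - PowerSeries.X ^ n * PowerSeries.C (T (2 * (d j : ℤ)))) *
        (1 - PowerSeries.X ^ n * PowerSeries.C (T (-(2 * (d j : ℤ)))))))

namespace PowerSeries

variable {R : Type*} [CommRing R]

theorem coeff_two_mul_s14 (f g : R⟦X⟧) :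
    coeff 2 (f * g) =
      constantCoeff f * coeff 2 g + coeff 1 f * coeff 1 g + coeff 2 f * constantCoeff g := by
  simp [coeff_mul, Finset.Nat.sum_antidiagonal_eq_sum_range_succ_mk, Finset.sum_range_succ]

theorem coeff_two_pow_of_constantCoeff_eq_one {f : R⟦X⟧} (hf : constantCoeff f = 1) (m : ℕ) :
    coeff 2 (f ^ m) = m * coeff 2 f + m.choose 2 * coeff 1 f ^ 2 := by
  induction m with
  | zero => simp
  | succ m ih =>
    rw [pow_succ, coeff_two_mul_s14, ih, coeff_one_pow, map_pow, hf, Nat.choose_succ_succ,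
      Nat.choose_one_right]
    push_cast
    ring

variable {ι : Type*}

theorem coeff_one_prod_of_constantCoeff_eq_one {s : Finset ι} {f : ι → R⟦X⟧}
    (hf : ∀ i ∈ s, constantCoeff (f i) = 1) :
    coeff 1 (∏ i ∈ s, f i) = ∑ i ∈ s, coeff 1 (f i) := by
  induction s using Finset.cons_induction with
  | empty => simp
  | cons a s ha ih =>
    rw [Finset.forall_mem_cons] at hf
    rw [Finset.prod_cons, coeff_one_mul, map_prod, Finset.prod_eq_one hf.2, hf.1, ih hf.2,
      Finset.sum_cons]
    ring

theorem coeff_two_prod_of_constantCoeff_eq_one [LinearOrder ι] {s : Finset ι} {f : ι → R⟦X⟧}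
    (hf : ∀ i ∈ s, constantCoeff (f i) = 1) :
    coeff 2 (∏ i ∈ s, f i) = ∑ i ∈ s, coeff 2 (f i) +
      ∑ i ∈ s, ∑ j ∈ s with i < j, coeff 1 (f i) * coeff 1 (f j) := by
  induction s using Finset.induction_on_max with
  | empty => simp
  | insert a s hmax ih =>
    have ha : a ∉ s := fun h => (hmax a h).false
    rw [Finset.forall_mem_insert] at hf
    have hpairs : ∀ i ∈ s, ∑ j ∈ insert a s with i < j, coeff 1 (f i) * coeff 1 (f j) =
        coeff 1 (f i) * coeff 1 (f a) + ∑ j ∈ s with i < j, coeff 1 (f i) * coeff 1 (f j) := by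
      intro i hi
      rw [Finset.filter_insert, if_pos (hmax i hi), Finset.sum_insert (by simp [ha])]
    have hnone : ∑ j ∈ insert a s with a < j, coeff 1 (f a) * coeff 1 (f j) = 0 :=
      Finset.sum_eq_zero fun j hj => by
        simp only [Finset.mem_filter, Finset.mem_insert] at hj
        obtain ⟨rfl | hj, hlt⟩ := hj
        exacts [hlt.false.elim, ((hmax j hj).asymm hlt).elim]
    rw [Finset.prod_insert ha, coeff_two_mul_s14, map_prod constantCoeff, Finset.prod_eq_one hf.2,
      hf.1, coeff_one_prod_of_constantCoeff_eq_one hf.2, ih hf.2, Finset.sum_insert ha,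
      Finset.sum_insert ha, hnone, Finset.sum_congr rfl hpairs, Finset.sum_add_distrib,
      ← Finset.sum_mul]
    ring

theorem coeff_eq_coeff_of_X_pow_dvd_sub {m i : ℕ} {f g : R⟦X⟧} (h : X ^ m ∣ f - g) (hi : i < m) :
    coeff i f = coeff i g :=
  sub_eq_zero.1 (by rw [← map_sub]; exact X_pow_dvd_iff.1 h i hi)

end PowerSeries

theorem Finset.dvd_prod_sub_one {ι α : Type*} [CommRing α] {x : α} {s : Finset ι} {f : ι → α}
    (h : ∀ i ∈ s, x ∣ f i - 1) : x ∣ ∏ i ∈ s, f i - 1 := by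
  simp_rw [← Ideal.mem_span_singleton, ← Ideal.Quotient.mk_eq_mk_iff_sub_mem] at h ⊢
  rw [map_prod, map_one]
  exact Finset.prod_eq_one h

theorem Nat.two_mul_choose_two_add (k : ℕ) : (2 * k).choose 2 + k = 2 * k ^ 2 := by
  rw [Nat.choose_two_right, mul_assoc, Nat.mul_div_cancel_left _ two_pos]
  cases k with
  | zero => rfl
  | succ m => rw [show 2 * (m + 1) - 1 = 2 * m + 1 by omega]; ring

section ThetaFactor

open PowerSeries

variable {R : Type*} [CommRing R] {ι : Type*} [Fintype ι]

/-- The `n`-th factor of `thetaProd`, with `a j` and `b j` in place of `X^{2d_j}` and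
`X^{-2d_j}`. -/
noncomputable def thetaFactor (k n : ℕ) (a b : ι → R) : R⟦X⟧ :=
  (1 - X ^ n) ^ (2 * k) *
    ∏ j, (1 - X ^ n * PowerSeries.C (a j)) * (1 - X ^ n * PowerSeries.C (b j))

variable (k : ℕ) (a b : ι → R)

theorem constantCoeff_thetaFactor {n : ℕ} (hn : n ≠ 0) :
    constantCoeff (thetaFactor k n a b) = 1 := by
  simp [thetaFactor, hn]

theorem X_pow_dvd_thetaFactor_sub_one (n : ℕ) : X ^ n ∣ thetaFactor k n a b - 1 := by
  rw [← Ideal.mem_span_singleton, ← Ideal.Quotient.mk_eq_mk_iff_sub_mem]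
  have hX : Ideal.Quotient.mk (Ideal.span {X ^ n}) (X ^ n : R⟦X⟧) = 0 :=
    Ideal.Quotient.eq_zero_iff_mem.2 (Ideal.mem_span_singleton_self _)
  simp [thetaFactor, hX]

theorem coeff_one_thetaFactor_one :
    coeff 1 (thetaFactor k 1 a b) = -(2 * (k : R)) - ∑ j, (a j + b j) := by
  rw [thetaFactor, coeff_one_mul, coeff_one_pow, coeff_one_prod_of_constantCoeff_eq_one]
  · simp [coeff_one_mul, Finset.sum_add_distrib, sub_eq_add_neg, add_comm]
  · simp

theorem coeff_two_thetaFactor_one [LinearOrder ι] (hab : ∀ j, a j * b j = 1) :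
    coeff 2 (thetaFactor k 1 a b) = (2 * k).choose 2 + 2 * k * ∑ j, (a j + b j) +
      Fintype.card ι + ∑ i, ∑ j with i < j, (a i + b i) * (a j + b j) := by
  rw [thetaFactor, coeff_two_mul_s14, coeff_one_pow, coeff_two_pow_of_constantCoeff_eq_one,
    coeff_one_prod_of_constantCoeff_eq_one, coeff_two_prod_of_constantCoeff_eq_one]
  · simp [coeff_one_mul, coeff_two_mul_s14, coeff_X, hab, Finset.sum_add_distrib, add_mul, mul_add,
      sub_eq_add_neg, add_assoc, add_comm, add_left_comm, mul_comm]
  all_goals simp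

theorem coeff_one_thetaFactor_two : coeff 1 (thetaFactor k 2 a b) = 0 := by
  rw [coeff_eq_coeff_of_X_pow_dvd_sub (X_pow_dvd_thetaFactor_sub_one k a b 2) one_lt_two,
    coeff_one, if_neg one_ne_zero]

theorem coeff_two_thetaFactor_two [LinearOrder ι] :
    coeff 2 (thetaFactor k 2 a b) = -(2 * (k : R)) - ∑ j, (a j + b j) := by
  rw [thetaFactor, coeff_two_mul_s14, coeff_two_pow_of_constantCoeff_eq_one,
    coeff_two_prod_of_constantCoeff_eq_one]
  · simp [coeff_one_mul, coeff_two_mul_s14, coeff_one_pow, coeff_one_prod_of_constantCoeff_eq_one,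
      Finset.sum_add_distrib, sub_eq_add_neg, add_comm]
  all_goals simp

theorem constantCoeff_prod_thetaFactor (M : ℕ) :
    constantCoeff (∏ n ∈ Finset.Icc 1 M, thetaFactor k n a b) = 1 := by
  rw [map_prod]
  exact Finset.prod_eq_one fun n hn =>
    constantCoeff_thetaFactor k a b (Nat.one_le_iff_ne_zero.1 (Finset.mem_Icc.1 hn).1)

variable {M : ℕ} (hM : 2 ≤ M)
include hM

theorem coeff_prod_thetaFactor_of_lt_three {i : ℕ} (hi : i < 3) :
    coeff i (∏ n ∈ Finset.Icc 1 M, thetaFactor k n a b) =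
      coeff i (thetaFactor k 1 a b * thetaFactor k 2 a b) := by
  have hIcc : Finset.Icc 1 M = insert 1 (insert 2 (Finset.Icc 3 M)) := by
    ext n
    simp only [Finset.mem_Icc, Finset.mem_insert]
    omega
  rw [hIcc, Finset.prod_insert (by simp), Finset.prod_insert (by simp), ← mul_assoc]
  refine coeff_eq_coeff_of_X_pow_dvd_sub ?_ hi
  rw [← mul_sub_one]
  refine Dvd.dvd.mul_left (Finset.dvd_prod_sub_one fun n hn => ?_) _
  exact (pow_dvd_pow X (Finset.mem_Icc.1 hn).1).trans (X_pow_dvd_thetaFactor_sub_one k a b n)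

theorem coeff_one_prod_thetaFactor :
    coeff 1 (∏ n ∈ Finset.Icc 1 M, thetaFactor k n a b) = -(2 * (k : R)) - ∑ j, (a j + b j) := by
  rw [coeff_prod_thetaFactor_of_lt_three k a b hM (by norm_num), coeff_one_mul,
    coeff_one_thetaFactor_one, coeff_one_thetaFactor_two,
    constantCoeff_thetaFactor k a b two_ne_zero]
  ring

theorem coeff_two_prod_thetaFactor [LinearOrder ι] (hab : ∀ j, a j * b j = 1) :
    coeff 2 (∏ n ∈ Finset.Icc 1 M, thetaFactor k n a b) =
      ∑ i, ∑ j with i < j, (a i + b i) * (a j + b j) + (2 * k - 1) * ∑ j, (a j + b j) +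
        (2 * k ^ 2 - 3 * k + Fintype.card ι) := by
  have hchoose : ((2 * k).choose 2 : R) + k = 2 * k ^ 2 := by
    exact_mod_cast congrArg (Nat.cast : ℕ → R) (Nat.two_mul_choose_two_add k)
  rw [coeff_prod_thetaFactor_of_lt_three k a b hM (by norm_num), coeff_two_mul_s14,
    coeff_two_thetaFactor_one k a b hab, coeff_one_thetaFactor_two, coeff_two_thetaFactor_two,
    constantCoeff_thetaFactor k a b one_ne_zero, constantCoeff_thetaFactor k a b two_ne_zero]
  linear_combination hchoose

end ThetaFactor

theorem stmt_14_general (k : ℕ) (ℓ : ℕ) (d : Fin ℓ → ℕ)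
    (M : ℕ) (hM : 2 ≤ M) :
    PowerSeries.coeff 0 (thetaProd k d M) = 1 ∧
    PowerSeries.coeff 1 (thetaProd k d M) =
      -(((2 * k : ℤ) : LaurentPolynomial ℤ) + sigma1 (fun j => (d j : ℤ))) ∧
    PowerSeries.coeff 2 (thetaProd k d M) =
      sigma2 (fun j => (d j : ℤ)) +
        ((2 * (k : ℤ) - 1 : ℤ) : LaurentPolynomial ℤ) * sigma1 (fun j => (d j : ℤ)) +
        ((2 * (k : ℤ) ^ 2 - 3 * (k : ℤ) + (ℓ : ℤ) : ℤ) : LaurentPolynomial ℤ) := by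
  let a : Fin ℓ → LaurentPolynomial ℤ := fun j => T (2 * (d j : ℤ))
  let b : Fin ℓ → LaurentPolynomial ℤ := fun j => T (-(2 * (d j : ℤ)))
  have hprod : thetaProd k d M = ∏ n ∈ Finset.Icc 1 M, thetaFactor k n a b := rfl
  have hσ₁ : sigma1 (fun j => (d j : ℤ)) = ∑ j, (a j + b j) := rfl
  have hσ₂ : sigma2 (fun j => (d j : ℤ)) = ∑ i, ∑ j with i < j, (a i + b i) * (a j + b j) := rfl
  have hab : ∀ j, a j * b j = 1 := fun j => by rw [← T_add, add_neg_cancel, T_zero]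
  refine ⟨?_, ?_, ?_⟩
  · rw [PowerSeries.coeff_zero_eq_constantCoeff_apply, hprod, constantCoeff_prod_thetaFactor]
  · rw [hprod, coeff_one_prod_thetaFactor k a b hM, hσ₁]
    push_cast
    ring
  · rw [hprod, coeff_two_prod_thetaFactor k a b hM hab, hσ₁, hσ₂, Fintype.card_fin]
    push_cast
    ring

theorem stmt_14 (k : ℕ) (ℓ : ℕ) (hℓ : 1 ≤ ℓ) (d : Fin ℓ → ℕ) (hd : ∀ j, 1 ≤ d j)
    (M : ℕ) (hM : 2 ≤ M) :
    PowerSeries.coeff 0 (thetaProd k d M) = 1 ∧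
    PowerSeries.coeff 1 (thetaProd k d M) =
      -(((2 * k : ℤ) : LaurentPolynomial ℤ) + sigma1 (fun j => (d j : ℤ))) ∧
    PowerSeries.coeff 2 (thetaProd k d M) =
      sigma2 (fun j => (d j : ℤ)) +
        ((2 * (k : ℤ) - 1 : ℤ) : LaurentPolynomial ℤ) * sigma1 (fun j => (d j : ℤ)) +
        ((2 * (k : ℤ) ^ 2 - 3 * (k : ℤ) + (ℓ : ℤ) : ℤ) : LaurentPolynomial ℤ) :=
  stmt_14_general k ℓ d M hM
end
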